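/- With homogeneous pressure Dirichlet data (g_p = 0) and τ, γ ≥ 0, the semi-discrete DG scheme with Lax–Friedrichs fluxes is energy-stable: the discrete energy E_h = Σ_e ∫_{Ω_e} (p_h²/(2ρc²) + ρ|u_h|²/2) satisfies dE_h/dt = −Σ_{interior faces} ∫ (τ/2 ⟦u_h⟧ₙ² + γ/2 |⟦p_h⟧ₙ|²) − (boundary terms) ≤ 0. -/

import Mathlib

open intervalIntegral

section AuxDG
open Finset Polynomial intervalIntegral


lemma poly_coeff_rep (k : ℕ) (f : ℝ → ℝ → ℝ)
    (hpoly : ∀ t : ℝ, ∃ P : Polynomial ℝ, P.natDegree ≤ k ∧ ∀ x, f x t = P.eval x)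
    (hreg : ∀ x : ℝ, ContDiff ℝ 1 fun t => f x t) :
    ∃ c : ℕ → ℝ → ℝ, (∀ j, ContDiff ℝ 1 (c j)) ∧
      ∀ x t : ℝ, f x t = ∑ j ∈ Finset.range (k+1), c j t * x ^ j := by
  set s : Finset ℕ := Finset.range (k+1) with hs
  set v : ℕ → ℝ := fun i => (i : ℝ) with hv
  have hvs : Set.InjOn v s := fun a _ b _ h => Nat.cast_injective h
  refine ⟨fun j t => ∑ i ∈ s, f (v i) t * (Lagrange.basis s v i).coeff j, ?_, ?_⟩
  · intro j
    exact ContDiff.sum fun i _ => (hreg (v i)).mul contDiff_const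
  · intro x t
    obtain ⟨P, hdeg, hP⟩ := hpoly t
    have hcard : (s.card : WithBot ℕ) = ((k+1 : ℕ) : WithBot ℕ) := by
      rw [hs, Finset.card_range]
    have hdlt : P.degree < (s.card : WithBot ℕ) := by
      rw [hcard]
      exact lt_of_le_of_lt P.degree_le_natDegree
        (by exact_mod_cast Nat.lt_succ_of_le hdeg)
    have hPint : P = Lagrange.interpolate s v (fun i => f (v i) t) :=
      Lagrange.eq_interpolate_of_eval_eq _ hvs hdlt (fun i _ => (hP (v i)).symm)
    have hcoeff : ∀ j, P.coeff j = ∑ i ∈ s, f (v i) t * (Lagrange.basis s v i).coeff j := by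
      intro j
      rw [hPint, Lagrange.interpolate_apply, Polynomial.finset_sum_coeff]
      exact Finset.sum_congr rfl fun i _ => by rw [Polynomial.coeff_C_mul]
    have := Polynomial.eval_eq_sum_range' (Nat.lt_succ_of_le hdeg) x
    rw [hP x, this]
    exact Finset.sum_congr rfl fun j _ => by rw [hcoeff j]


lemma cont_sum_pow (K : ℕ) (c : ℕ → ℝ) :
    Continuous (fun x : ℝ => ∑ j ∈ Finset.range K, c j * x ^ j) :=
  continuous_finset_sum _ fun j _ => continuous_const.mul (continuous_pow j)

lemma integral_sum_mul_sum (K : ℕ) (a b : ℝ) (c d : ℕ → ℝ) :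
    (∫ x in a..b, (∑ j ∈ Finset.range K, c j * x ^ j) *
        (∑ i ∈ Finset.range K, d i * x ^ i)) =
    ∑ j ∈ Finset.range K, ∑ i ∈ Finset.range K,
      c j * d i * ((b ^ (j+i+1) - a ^ (j+i+1)) / (j+i+1)) := by
  have hpt : ∀ x : ℝ, (∑ j ∈ Finset.range K, c j * x ^ j) *
      (∑ i ∈ Finset.range K, d i * x ^ i)
      = ∑ j ∈ Finset.range K, ∑ i ∈ Finset.range K, c j * d i * x ^ (j+i) := by
    intro x
    rw [Finset.sum_mul_sum]
    exact Finset.sum_congr rfl fun j _ => Finset.sum_congr rfl fun i _ => by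
      rw [pow_add]; ring
  simp_rw [hpt]
  rw [intervalIntegral.integral_finset_sum]
  · refine Finset.sum_congr rfl fun j _ => ?_
    rw [intervalIntegral.integral_finset_sum]
    · refine Finset.sum_congr rfl fun i _ => ?_
      rw [intervalIntegral.integral_const_mul, integral_pow]
      push_cast; ring
    · intro i _
      exact (continuous_const.mul (continuous_pow _)).intervalIntegrable _ _
  · intro j _
    exact (continuous_finset_sum _ fun i _ =>
      continuous_const.mul (continuous_pow _)).intervalIntegrable _ _

lemma hasDerivAt_integral_prod (K : ℕ) (a b : ℝ) (c d : ℕ → ℝ → ℝ)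
    (hc : ∀ j, ContDiff ℝ 1 (c j)) (hd : ∀ j, ContDiff ℝ 1 (d j)) (t : ℝ) :
    HasDerivAt (fun s => ∫ x in a..b,
        (∑ j ∈ Finset.range K, c j s * x ^ j) * (∑ i ∈ Finset.range K, d i s * x ^ i))
      (∫ x in a..b,
        ((∑ j ∈ Finset.range K, deriv (c j) t * x ^ j) *
            (∑ i ∈ Finset.range K, d i t * x ^ i) +
         (∑ j ∈ Finset.range K, c j t * x ^ j) *
            (∑ i ∈ Finset.range K, deriv (d i) t * x ^ i))) t := by
  have hfun : (fun s => ∫ x in a..b,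
      (∑ j ∈ Finset.range K, c j s * x ^ j) * (∑ i ∈ Finset.range K, d i s * x ^ i))
      = fun s => ∑ j ∈ Finset.range K, ∑ i ∈ Finset.range K,
        c j s * d i s * ((b ^ (j+i+1) - a ^ (j+i+1)) / (j+i+1)) :=
    funext fun s => integral_sum_mul_sum K a b (fun j => c j s) (fun i => d i s)
  have hder : (∫ x in a..b,
      ((∑ j ∈ Finset.range K, deriv (c j) t * x ^ j) *
          (∑ i ∈ Finset.range K, d i t * x ^ i) +
       (∑ j ∈ Finset.range K, c j t * x ^ j) *
          (∑ i ∈ Finset.range K, deriv (d i) t * x ^ i)))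
      = ∑ j ∈ Finset.range K, ∑ i ∈ Finset.range K,
        (deriv (c j) t * d i t + c j t * deriv (d i) t) *
          ((b ^ (j+i+1) - a ^ (j+i+1)) / (j+i+1)) := by
    rw [intervalIntegral.integral_add
      (((cont_sum_pow K _).fun_mul (cont_sum_pow K _)).intervalIntegrable _ _)
      (((cont_sum_pow K _).fun_mul (cont_sum_pow K _)).intervalIntegrable _ _),
      integral_sum_mul_sum, integral_sum_mul_sum, ← Finset.sum_add_distrib]
    refine Finset.sum_congr rfl fun j _ => ?_
    rw [← Finset.sum_add_distrib]
    exact Finset.sum_congr rfl fun i _ => by ring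
  rw [hfun, hder]
  refine HasDerivAt.fun_sum fun j _ => HasDerivAt.fun_sum fun i _ => ?_
  have hcj : HasDerivAt (c j) (deriv (c j) t) t :=
    (((hc j).differentiable one_ne_zero) t).hasDerivAt
  have hdi : HasDerivAt (d i) (deriv (d i) t) t :=
    (((hd i).differentiable one_ne_zero) t).hasDerivAt
  simpa using (hcj.mul hdi).mul_const ((b ^ (j+i+1) - a ^ (j+i+1)) / (j+i+1) : ℝ)


lemma poly_ftc (P : Polynomial ℝ) (a b : ℝ) :
    (∫ x in a..b, (Polynomial.derivative P).eval x) = P.eval b - P.eval a := by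
  have h : ∀ x ∈ Set.uIcc a b, HasDerivAt (fun y => P.eval y) ((Polynomial.derivative P).eval x) x :=
    fun x _ => P.hasDerivAt x
  exact intervalIntegral.integral_eq_sub_of_hasDerivAt h
    ((Polynomial.continuous _).intervalIntegrable _ _)

/-- The polynomial with given coefficients. -/
noncomputable def polyOf (K : ℕ) (c : ℕ → ℝ) : Polynomial ℝ :=
  ∑ j ∈ Finset.range K, Polynomial.C (c j) * Polynomial.X ^ j

lemma polyOf_eval (K : ℕ) (c : ℕ → ℝ) (x : ℝ) :
    (polyOf K c).eval x = ∑ j ∈ Finset.range K, c j * x ^ j := by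
  simp [polyOf, Polynomial.eval_finset_sum]

lemma polyOf_natDegree (k : ℕ) (c : ℕ → ℝ) : (polyOf (k+1) c).natDegree ≤ k := by
  refine Polynomial.natDegree_sum_le_of_forall_le _ _ fun j hj => ?_
  exact le_trans (Polynomial.natDegree_C_mul_le _ _)
    (le_trans (Polynomial.natDegree_X_pow_le j) (Nat.lt_succ_iff.mp (Finset.mem_range.mp hj)))

lemma sum_Ioo_shift (g : ℕ → ℝ) (N : ℕ) :
    ∑ i ∈ Finset.Ioo 0 N, g i = ∑ e ∈ Finset.range (N-1), g (e+1) := by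
  rw [← Finset.Ico_add_one_left_eq_Ioo, Finset.sum_Ico_eq_sum_range]
  simp [add_comm 1]

end AuxDG

/-- Energy stability of the semi-discrete DG scheme with Lax–Friedrichs fluxes
and homogeneous pressure Dirichlet data (1D formulation on a mesh of N
elements): the discrete energy satisfies
dE_h/dt = −Σ_interior (τ/2 ⟦u_h⟧ₙ² + γ/2 ⟦p_h⟧ₙ²) − boundary terms ≤ 0. -/
theorem dg_energy_stability
    (N k : ℕ) (hN : 0 < N)
    (xnode : ℕ → ℝ) (hmesh : ∀ i < N, xnode i < xnode (i + 1))
    (ρ c τ γ : ℝ) (hρ : 0 < ρ) (hc : 0 < c) (hτ : 0 ≤ τ) (hγ : 0 ≤ γ)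
    (u p : ℕ → ℝ → ℝ → ℝ)
    -- broken polynomial spaces: on each element the fields are polynomials of degree ≤ k in space
    (hupoly : ∀ e < N, ∀ t : ℝ, ∃ P : Polynomial ℝ,
      P.natDegree ≤ k ∧ ∀ x, u e x t = P.eval x)
    (hppoly : ∀ e < N, ∀ t : ℝ, ∃ P : Polynomial ℝ,
      P.natDegree ≤ k ∧ ∀ x, p e x t = P.eval x)
    -- smoothness in time
    (hureg : ∀ e x, ContDiff ℝ 1 fun t => u e x t)
    (hpreg : ∀ e x, ContDiff ℝ 1 fun t => p e x t)
    -- numerical fluxes at the mesh nodes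
    (Pstar Ustar : ℕ → ℝ → ℝ)
    -- interior faces: Lax–Friedrichs fluxes p* = {p} + (τ/2)⟦u⟧ₙ, u* = {u} + (γ/2)⟦p⟧ₙ
    (hint : ∀ i, 0 < i → i < N → ∀ t,
      Pstar i t = (p (i - 1) (xnode i) t + p i (xnode i) t) / 2 +
          τ / 2 * (u (i - 1) (xnode i) t - u i (xnode i) t) ∧
      Ustar i t = (u (i - 1) (xnode i) t + u i (xnode i) t) / 2 +
          γ / 2 * (p (i - 1) (xnode i) t - p i (xnode i) t))
    -- boundary faces: mirror principle with g_p = 0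
    (hbl : ∀ t, Pstar 0 t = 0 ∧
      Ustar 0 t = u 0 (xnode 0) t - γ * p 0 (xnode 0) t)
    (hbr : ∀ t, Pstar N t = 0 ∧
      Ustar N t = u (N - 1) (xnode N) t + γ * p (N - 1) (xnode N) t)
    -- semi-discrete DG momentum equation, for all broken polynomial test functions
    (hmom : ∀ e < N, ∀ t : ℝ, ∀ w : Polynomial ℝ, w.natDegree ≤ k →
      (∫ x in (xnode e)..(xnode (e + 1)), w.eval x * deriv (fun s => u e x s) t) -
        (1 / ρ) * (∫ x in (xnode e)..(xnode (e + 1)),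
          (Polynomial.derivative w).eval x * p e x t) +
        (1 / ρ) * (w.eval (xnode (e + 1)) * Pstar (e + 1) t -
          w.eval (xnode e) * Pstar e t) = 0)
    -- semi-discrete DG mass equation, for all broken polynomial test functions
    (hmass : ∀ e < N, ∀ t : ℝ, ∀ q : Polynomial ℝ, q.natDegree ≤ k →
      (∫ x in (xnode e)..(xnode (e + 1)), q.eval x * deriv (fun s => p e x s) t) -
        ρ * c ^ 2 * (∫ x in (xnode e)..(xnode (e + 1)),
          (Polynomial.derivative q).eval x * u e x t) +
        ρ * c ^ 2 * (q.eval (xnode (e + 1)) * Ustar (e + 1) t -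
          q.eval (xnode e) * Ustar e t) = 0)
    -- the discrete energy
    (E : ℝ → ℝ)
    (hE : ∀ t, E t = ∑ e ∈ Finset.range N,
      ∫ x in (xnode e)..(xnode (e + 1)),
        ((p e x t) ^ 2 / (2 * ρ * c ^ 2) + ρ * (u e x t) ^ 2 / 2)) :
    ∀ t : ℝ,
      deriv E t =
        -(∑ i ∈ Finset.Ioo 0 N,
            (τ / 2 * (u (i - 1) (xnode i) t - u i (xnode i) t) ^ 2 +
             γ / 2 * (p (i - 1) (xnode i) t - p i (xnode i) t) ^ 2)) -
        (γ * (p 0 (xnode 0) t) ^ 2 + γ * (p (N - 1) (xnode N) t) ^ 2) ∧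
      deriv E t ≤ 0 := by
  have hρ0 : ρ ≠ 0 := hρ.ne'
  have hc0 : c ≠ 0 := hc.ne'
  -- coefficient representations
  have hpex : ∀ e : ℕ, ∃ cc : ℕ → ℝ → ℝ, (∀ j, ContDiff ℝ 1 (cc j)) ∧
      (e < N → ∀ x t : ℝ, p e x t = ∑ j ∈ Finset.range (k+1), cc j t * x ^ j) := by
    intro e
    by_cases he : e < N
    · obtain ⟨cc, h1, h2⟩ := poly_coeff_rep k (p e) (fun t => hppoly e he t) (fun x => hpreg e x)
      exact ⟨cc, h1, fun _ => h2⟩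
    · exact ⟨fun _ _ => 0, fun _ => contDiff_const, fun h => absurd h he⟩
  have huex : ∀ e : ℕ, ∃ cc : ℕ → ℝ → ℝ, (∀ j, ContDiff ℝ 1 (cc j)) ∧
      (e < N → ∀ x t : ℝ, u e x t = ∑ j ∈ Finset.range (k+1), cc j t * x ^ j) := by
    intro e
    by_cases he : e < N
    · obtain ⟨cc, h1, h2⟩ := poly_coeff_rep k (u e) (fun t => hupoly e he t) (fun x => hureg e x)
      exact ⟨cc, h1, fun _ => h2⟩
    · exact ⟨fun _ _ => 0, fun _ => contDiff_const, fun h => absurd h he⟩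
  choose cp hcpreg hcprep using hpex
  choose cu hcureg hcurep using huex
  -- time-derivative formulas
  have hpderiv : ∀ e, e < N → ∀ x t : ℝ, deriv (fun s => p e x s) t
      = ∑ j ∈ Finset.range (k+1), deriv (cp e j) t * x ^ j := by
    intro e he x t
    have hfun : (fun s => p e x s) = fun s => ∑ j ∈ Finset.range (k+1), cp e j s * x ^ j :=
      funext fun s => hcprep e he x s
    rw [hfun]
    refine HasDerivAt.deriv (HasDerivAt.fun_sum fun j _ => ?_)
    exact ((((hcpreg e j).differentiable one_ne_zero) t).hasDerivAt).mul_const (x ^ j)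
  have huderiv : ∀ e, e < N → ∀ x t : ℝ, deriv (fun s => u e x s) t
      = ∑ j ∈ Finset.range (k+1), deriv (cu e j) t * x ^ j := by
    intro e he x t
    have hfun : (fun s => u e x s) = fun s => ∑ j ∈ Finset.range (k+1), cu e j s * x ^ j :=
      funext fun s => hcurep e he x s
    rw [hfun]
    refine HasDerivAt.deriv (HasDerivAt.fun_sum fun j _ => ?_)
    exact ((((hcureg e j).differentiable one_ne_zero) t).hasDerivAt).mul_const (x ^ j)
  intro t
  -- element derivative values
  set D : ℕ → ℝ := fun e =>
    (1/(2*ρ*c^2)) * (∫ x in (xnode e)..(xnode (e+1)),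
      ((∑ j ∈ Finset.range (k+1), deriv (cp e j) t * x ^ j) *
          (∑ i ∈ Finset.range (k+1), cp e i t * x ^ i) +
       (∑ j ∈ Finset.range (k+1), cp e j t * x ^ j) *
          (∑ i ∈ Finset.range (k+1), deriv (cp e i) t * x ^ i))) +
    (ρ/2) * (∫ x in (xnode e)..(xnode (e+1)),
      ((∑ j ∈ Finset.range (k+1), deriv (cu e j) t * x ^ j) *
          (∑ i ∈ Finset.range (k+1), cu e i t * x ^ i) +
       (∑ j ∈ Finset.range (k+1), cu e j t * x ^ j) *
          (∑ i ∈ Finset.range (k+1), deriv (cu e i) t * x ^ i))) with hD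
  have key : ∀ e, e < N → HasDerivAt (fun s => ∫ x in (xnode e)..(xnode (e+1)),
      ((p e x s) ^ 2 / (2 * ρ * c ^ 2) + ρ * (u e x s) ^ 2 / 2)) (D e) t := by
    intro e he
    have hrw : (fun s => ∫ x in (xnode e)..(xnode (e+1)),
        ((p e x s) ^ 2 / (2 * ρ * c ^ 2) + ρ * (u e x s) ^ 2 / 2))
        = fun s => (1/(2*ρ*c^2)) * (∫ x in (xnode e)..(xnode (e+1)),
            (∑ j ∈ Finset.range (k+1), cp e j s * x ^ j) *
              (∑ i ∈ Finset.range (k+1), cp e i s * x ^ i)) +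
          (ρ/2) * (∫ x in (xnode e)..(xnode (e+1)),
            (∑ j ∈ Finset.range (k+1), cu e j s * x ^ j) *
              (∑ i ∈ Finset.range (k+1), cu e i s * x ^ i)) := by
      funext s
      rw [show (∫ x in (xnode e)..(xnode (e+1)),
          ((p e x s) ^ 2 / (2 * ρ * c ^ 2) + ρ * (u e x s) ^ 2 / 2))
          = ∫ x in (xnode e)..(xnode (e+1)),
            ((1/(2*ρ*c^2)) * ((∑ j ∈ Finset.range (k+1), cp e j s * x ^ j) *
                (∑ i ∈ Finset.range (k+1), cp e i s * x ^ i)) +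
             (ρ/2) * ((∑ j ∈ Finset.range (k+1), cu e j s * x ^ j) *
                (∑ i ∈ Finset.range (k+1), cu e i s * x ^ i))) from
        intervalIntegral.integral_congr (fun x _ => by
          rw [hcprep e he x s, hcurep e he x s]; ring)]
      rw [intervalIntegral.integral_add
        ((continuous_const.fun_mul ((cont_sum_pow _ _).fun_mul (cont_sum_pow _ _))).intervalIntegrable _ _)
        ((continuous_const.fun_mul ((cont_sum_pow _ _).fun_mul (cont_sum_pow _ _))).intervalIntegrable _ _),
        intervalIntegral.integral_const_mul, intervalIntegral.integral_const_mul]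
    rw [hrw, hD]
    exact ((hasDerivAt_integral_prod (k+1) _ _ (cp e) (cp e) (hcpreg e) (hcpreg e) t).const_mul
        _).add
      ((hasDerivAt_integral_prod (k+1) _ _ (cu e) (cu e) (hcureg e) (hcureg e) t).const_mul _)
  have hEder : HasDerivAt E (∑ e ∈ Finset.range N, D e) t := by
    have hEfun : E = fun s => ∑ e ∈ Finset.range N,
        ∫ x in (xnode e)..(xnode (e+1)),
          ((p e x s) ^ 2 / (2 * ρ * c ^ 2) + ρ * (u e x s) ^ 2 / 2) := funext hE
    rw [hEfun]
    exact HasDerivAt.fun_sum fun e he => key e (Finset.mem_range.mp he)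
  -- face functionals
  set Rf : ℕ → ℝ := fun i =>
    p (i-1) (xnode i) t * u (i-1) (xnode i) t - p (i-1) (xnode i) t * Ustar i t
      - u (i-1) (xnode i) t * Pstar i t with hRf
  set Lf : ℕ → ℝ := fun i =>
    -(p i (xnode i) t * u i (xnode i) t) + p i (xnode i) t * Ustar i t
      + u i (xnode i) t * Pstar i t with hLf
  -- the per-element identity
  have hDe : ∀ e, e < N → D e = Rf (e+1) + Lf e := by
    intro e he
    set Qp : Polynomial ℝ := polyOf (k+1) (fun j => cp e j t) with hQp
    set Qu : Polynomial ℝ := polyOf (k+1) (fun j => cu e j t) with hQu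
    have hQpev : ∀ x : ℝ, Qp.eval x = p e x t := fun x => by
      rw [hQp, polyOf_eval, ← hcprep e he x t]
    have hQuev : ∀ x : ℝ, Qu.eval x = u e x t := fun x => by
      rw [hQu, polyOf_eval, ← hcurep e he x t]
    -- the two inner products with the time derivatives
    have h2p : (∫ x in (xnode e)..(xnode (e+1)),
        ((∑ j ∈ Finset.range (k+1), deriv (cp e j) t * x ^ j) *
            (∑ i ∈ Finset.range (k+1), cp e i t * x ^ i) +
         (∑ j ∈ Finset.range (k+1), cp e j t * x ^ j) *
            (∑ i ∈ Finset.range (k+1), deriv (cp e i) t * x ^ i)))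
        = 2 * ∫ x in (xnode e)..(xnode (e+1)), Qp.eval x * deriv (fun s => p e x s) t := by
      rw [show (∫ x in (xnode e)..(xnode (e+1)),
          ((∑ j ∈ Finset.range (k+1), deriv (cp e j) t * x ^ j) *
              (∑ i ∈ Finset.range (k+1), cp e i t * x ^ i) +
           (∑ j ∈ Finset.range (k+1), cp e j t * x ^ j) *
              (∑ i ∈ Finset.range (k+1), deriv (cp e i) t * x ^ i)))
          = ∫ x in (xnode e)..(xnode (e+1)),
              2 * (Qp.eval x * deriv (fun s => p e x s) t) from
        intervalIntegral.integral_congr (fun x _ => by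
          rw [hQp, polyOf_eval, hpderiv e he x t]; ring)]
      rw [intervalIntegral.integral_const_mul]
    have h2u : (∫ x in (xnode e)..(xnode (e+1)),
        ((∑ j ∈ Finset.range (k+1), deriv (cu e j) t * x ^ j) *
            (∑ i ∈ Finset.range (k+1), cu e i t * x ^ i) +
         (∑ j ∈ Finset.range (k+1), cu e j t * x ^ j) *
            (∑ i ∈ Finset.range (k+1), deriv (cu e i) t * x ^ i)))
        = 2 * ∫ x in (xnode e)..(xnode (e+1)), Qu.eval x * deriv (fun s => u e x s) t := by
      rw [show (∫ x in (xnode e)..(xnode (e+1)),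
          ((∑ j ∈ Finset.range (k+1), deriv (cu e j) t * x ^ j) *
              (∑ i ∈ Finset.range (k+1), cu e i t * x ^ i) +
           (∑ j ∈ Finset.range (k+1), cu e j t * x ^ j) *
              (∑ i ∈ Finset.range (k+1), deriv (cu e i) t * x ^ i)))
          = ∫ x in (xnode e)..(xnode (e+1)),
              2 * (Qu.eval x * deriv (fun s => u e x s) t) from
        intervalIntegral.integral_congr (fun x _ => by
          rw [hQu, polyOf_eval, huderiv e he x t]; ring)]
      rw [intervalIntegral.integral_const_mul]
    -- DG equations with the solution as test function
    have hm1 := hmass e he t Qp (hQp ▸ polyOf_natDegree k _)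
    have hm2 := hmom e he t Qu (hQu ▸ polyOf_natDegree k _)
    -- combine the stiffness integrals via FTC
    have hIpu : (∫ x in (xnode e)..(xnode (e+1)),
        (Polynomial.derivative Qp).eval x * u e x t)
        = ∫ x in (xnode e)..(xnode (e+1)), (Polynomial.derivative Qp).eval x * Qu.eval x :=
      intervalIntegral.integral_congr (fun x _ => by rw [hQuev x])
    have hIup : (∫ x in (xnode e)..(xnode (e+1)),
        (Polynomial.derivative Qu).eval x * p e x t)
        = ∫ x in (xnode e)..(xnode (e+1)), (Polynomial.derivative Qu).eval x * Qp.eval x :=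
      intervalIntegral.integral_congr (fun x _ => by rw [hQpev x])
    have hftc : (∫ x in (xnode e)..(xnode (e+1)),
          (Polynomial.derivative Qp).eval x * Qu.eval x)
        + (∫ x in (xnode e)..(xnode (e+1)),
          (Polynomial.derivative Qu).eval x * Qp.eval x)
        = p e (xnode (e+1)) t * u e (xnode (e+1)) t - p e (xnode e) t * u e (xnode e) t := by
      rw [← intervalIntegral.integral_add
        (((Polynomial.continuous _).fun_mul (Polynomial.continuous _)).intervalIntegrable _ _)
        (((Polynomial.continuous _).fun_mul (Polynomial.continuous _)).intervalIntegrable _ _)]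
      rw [show (∫ x in (xnode e)..(xnode (e+1)),
          ((Polynomial.derivative Qp).eval x * Qu.eval x +
           (Polynomial.derivative Qu).eval x * Qp.eval x))
          = ∫ x in (xnode e)..(xnode (e+1)), (Polynomial.derivative (Qp * Qu)).eval x from
        intervalIntegral.integral_congr (fun x _ => by
          rw [Polynomial.derivative_mul, Polynomial.eval_add, Polynomial.eval_mul,
            Polynomial.eval_mul]; ring)]
      rw [poly_ftc (Qp * Qu), Polynomial.eval_mul, Polynomial.eval_mul,
        hQpev, hQuev, hQpev, hQuev]
    rw [hD]
    simp only []
    rw [h2p, h2u]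
    rw [hIpu] at hm1
    rw [hIup] at hm2
    have hne : ρ * c ^ 2 ≠ 0 := by positivity
    -- solve for the inner products
    have e1 : (∫ x in (xnode e)..(xnode (e+1)), Qp.eval x * deriv (fun s => p e x s) t)
        = ρ * c ^ 2 * (∫ x in (xnode e)..(xnode (e+1)),
            (Polynomial.derivative Qp).eval x * Qu.eval x)
          - ρ * c ^ 2 * (Qp.eval (xnode (e+1)) * Ustar (e+1) t
            - Qp.eval (xnode e) * Ustar e t) := by linarith
    have e2 : (∫ x in (xnode e)..(xnode (e+1)), Qu.eval x * deriv (fun s => u e x s) t)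
        = (1/ρ) * (∫ x in (xnode e)..(xnode (e+1)),
            (Polynomial.derivative Qu).eval x * Qp.eval x)
          - (1/ρ) * (Qu.eval (xnode (e+1)) * Pstar (e+1) t
            - Qu.eval (xnode e) * Pstar e t) := by linarith
    rw [e1, e2]
    have hsc : ∀ A B C Dd : ℝ,
        1/(2*ρ*c^2) * (2 * (ρ * c ^ 2 * A - ρ * c ^ 2 * B)) +
          ρ/2 * (2 * (1/ρ * C - 1/ρ * Dd)) = (A + C) - B - Dd := by
      intro A B C Dd; field_simp; ring
    rw [hsc]
    rw [hftc, hRf, hLf]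
    simp only [Nat.add_sub_cancel, hQpev, hQuev]
    ring
  -- assemble the sum
  have hderivE : deriv E t = ∑ e ∈ Finset.range N, (Rf (e+1) + Lf e) := by
    rw [hEder.deriv]
    exact Finset.sum_congr rfl fun e he => hDe e (Finset.mem_range.mp he)
  have hsplitsum : ∑ e ∈ Finset.range N, (Rf (e+1) + Lf e)
      = (∑ i ∈ Finset.Ioo 0 N, (Rf i + Lf i)) + Rf N + Lf 0 := by
    obtain ⟨M, rfl⟩ : ∃ M, N = M + 1 := ⟨N-1, (Nat.succ_pred_eq_of_pos hN).symm⟩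
    rw [Finset.sum_add_distrib, Finset.sum_range_succ (fun e => Rf (e+1)) M,
      Finset.sum_range_succ' Lf M, sum_Ioo_shift (fun i => Rf i + Lf i) (M+1)]
    simp only [Nat.add_sub_cancel, Finset.sum_add_distrib]
    ring
  have hface : ∀ i ∈ Finset.Ioo 0 N, Rf i + Lf i
      = -(τ / 2 * (u (i - 1) (xnode i) t - u i (xnode i) t) ^ 2 +
          γ / 2 * (p (i - 1) (xnode i) t - p i (xnode i) t) ^ 2) := by
    intro i hi
    obtain ⟨h0, hN'⟩ := Finset.mem_Ioo.mp hi
    obtain ⟨hP, hU⟩ := hint i h0 hN' t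
    rw [hRf, hLf]
    simp only []
    rw [hP, hU]
    ring
  have hRN : Rf N = -(γ * (p (N-1) (xnode N) t) ^ 2) := by
    obtain ⟨hP, hU⟩ := hbr t
    rw [hRf]
    simp only []
    rw [hP, hU]
    ring
  have hL0 : Lf 0 = -(γ * (p 0 (xnode 0) t) ^ 2) := by
    obtain ⟨hP, hU⟩ := hbl t
    rw [hLf]
    simp only []
    rw [hP, hU]
    ring
  have hmain : deriv E t =
      -(∑ i ∈ Finset.Ioo 0 N,
          (τ / 2 * (u (i - 1) (xnode i) t - u i (xnode i) t) ^ 2 +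
           γ / 2 * (p (i - 1) (xnode i) t - p i (xnode i) t) ^ 2)) -
      (γ * (p 0 (xnode 0) t) ^ 2 + γ * (p (N - 1) (xnode N) t) ^ 2) := by
    rw [hderivE, hsplitsum, Finset.sum_congr rfl hface, hRN, hL0, ← Finset.sum_neg_distrib]
    ring
  refine ⟨hmain, ?_⟩
  rw [hmain]
  have hS : 0 ≤ ∑ i ∈ Finset.Ioo 0 N,
      (τ / 2 * (u (i - 1) (xnode i) t - u i (xnode i) t) ^ 2 +
       γ / 2 * (p (i - 1) (xnode i) t - p i (xnode i) t) ^ 2) :=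
    Finset.sum_nonneg fun i _ => by positivity
  have hb1 : 0 ≤ γ * (p 0 (xnode 0) t) ^ 2 := mul_nonneg hγ (sq_nonneg _)
  have hb2 : 0 ≤ γ * (p (N - 1) (xnode N) t) ^ 2 := mul_nonneg hγ (sq_nonneg _)
  linarith
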